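/- There exist positive stiffness parameter tuples b, b' ∈ ℝ⁶ with b ≠ b', and a nonempty set V ⊆ S_b ∩ S_{b'} that is open both in S_b and in S_{b'} (with respect to the subspace topology induced by the Euclidean topology of ℝ²), such that S_b ≠ S_{b'}. That is, the generic uniqueness of the slowness curve from a relatively open subset fails for some (e.g., fully isotropic) positive two-dimensional stiffness tensors. -/
import Mathlib


open Matrix

/-- The Christoffel matrix of a two-dimensional stiffness tensor with Voigt parameters
`b = (b11,b12,b13,b22,b23,b33)` (indexed `0,…,5`), evaluated at a slowness vector `p ∈ ℝ²`. -/
def christoffelEval2 (b : Fin 6 → ℝ) (p : Fin 2 → ℝ) : Matrix (Fin 2) (Fin 2) ℝ :=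
  !![b 0 * p 0 ^ 2 + 2 * b 2 * p 0 * p 1 + b 5 * p 1 ^ 2,
     b 2 * p 0 ^ 2 + (b 5 + b 1) * p 0 * p 1 + b 4 * p 1 ^ 2;
     b 2 * p 0 ^ 2 + (b 5 + b 1) * p 0 * p 1 + b 4 * p 1 ^ 2,
     b 5 * p 0 ^ 2 + 2 * b 4 * p 0 * p 1 + b 3 * p 1 ^ 2]

/-- The slowness curve `S_b = {p ∈ ℝ² : det(Γ_b(p) − I₂) = 0}`. -/
def slownessSet (b : Fin 6 → ℝ) : Set (Fin 2 → ℝ) :=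
  {p | (christoffelEval2 b p - 1).det = 0}

/-- Positivity of a two-dimensional stiffness tensor given in Voigt parameters. -/
def IsPositiveStiffness2 (b : Fin 6 → ℝ) : Prop :=
  ∀ A : Matrix (Fin 2) (Fin 2) ℝ, A.IsSymm → A ≠ 0 →
    0 < b 0 * A 0 0 ^ 2 + 2 * b 1 * A 0 0 * A 1 1 + b 3 * A 1 1 ^ 2
      + 4 * b 2 * A 0 0 * A 0 1 + 4 * b 4 * A 1 1 * A 0 1 + 4 * b 5 * A 0 1 ^ 2

/-- `V` is a relatively open subset of `S` (in the subspace topology from `ℝ²`). -/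
def IsRelativelyOpen (V S : Set (Fin 2 → ℝ)) : Prop :=
  ∃ U : Set (Fin 2 → ℝ), IsOpen U ∧ V = U ∩ S

noncomputable def bA : Fin 6 → ℝ := ![1, 0, 0, 1, 0, 1/2]

noncomputable def bB : Fin 6 → ℝ := ![1, 1/3, 0, 1, 0, 1/3]

lemma detA (p : Fin 2 → ℝ) :
    (christoffelEval2 bA p - 1).det
      = (p 0 ^ 2 + p 1 ^ 2 - 1) * ((1/2) * (p 0 ^ 2 + p 1 ^ 2) - 1) := by
  have h0 : bA 0 = 1 := rfl
  have h1 : bA 1 = 0 := rfl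
  have h2 : bA 2 = 0 := rfl
  have h3 : bA 3 = 1 := rfl
  have h4 : bA 4 = 0 := rfl
  have h5 : bA 5 = 1/2 := rfl
  simp only [christoffelEval2, h0, h1, h2, h3, h4, h5]
  simp [Matrix.det_fin_two, Matrix.sub_apply, Matrix.one_apply]
  ring

lemma detB (p : Fin 2 → ℝ) :
    (christoffelEval2 bB p - 1).det
      = (p 0 ^ 2 + p 1 ^ 2 - 1) * ((1/3) * (p 0 ^ 2 + p 1 ^ 2) - 1) := by
  have h0 : bB 0 = 1 := rfl
  have h1 : bB 1 = 1/3 := rfl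
  have h2 : bB 2 = 0 := rfl
  have h3 : bB 3 = 1 := rfl
  have h4 : bB 4 = 0 := rfl
  have h5 : bB 5 = 1/3 := rfl
  simp only [christoffelEval2, h0, h1, h2, h3, h4, h5]
  simp [Matrix.det_fin_two, Matrix.sub_apply, Matrix.one_apply]
  ring

lemma entry_ne (A : Matrix (Fin 2) (Fin 2) ℝ) (hsym : A.IsSymm) (hA : A ≠ 0) :
    A 0 0 ≠ 0 ∨ A 1 1 ≠ 0 ∨ A 0 1 ≠ 0 := by
  by_contra h
  push_neg at h
  obtain ⟨h1, h2, h3⟩ := h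
  apply hA
  have h10 : A 1 0 = 0 := by rw [hsym.apply 0 1]; exact h3
  ext i j
  fin_cases i <;> fin_cases j <;> simpa

lemma posA : IsPositiveStiffness2 bA := by
  intro A hsym hA
  have h0 : bA 0 = 1 := rfl
  have h1 : bA 1 = 0 := rfl
  have h2 : bA 2 = 0 := rfl
  have h3 : bA 3 = 1 := rfl
  have h4 : bA 4 = 0 := rfl
  have h5 : bA 5 = 1/2 := rfl
  rw [h0, h1, h2, h3, h4, h5]
  rcases entry_ne A hsym hA with h | h | h <;>
    nlinarith [sq_nonneg (A 0 0), sq_nonneg (A 1 1), sq_nonneg (A 0 1),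
      sq_pos_of_ne_zero h]

lemma posB : IsPositiveStiffness2 bB := by
  intro A hsym hA
  have h0 : bB 0 = 1 := rfl
  have h1 : bB 1 = 1/3 := rfl
  have h2 : bB 2 = 0 := rfl
  have h3 : bB 3 = 1 := rfl
  have h4 : bB 4 = 0 := rfl
  have h5 : bB 5 = 1/3 := rfl
  rw [h0, h1, h2, h3, h4, h5]
  rcases entry_ne A hsym hA with h | h | h <;>
    nlinarith [sq_nonneg (A 0 0), sq_nonneg (A 1 1), sq_nonneg (A 0 1),
      sq_nonneg (A 0 0 + A 1 1), sq_pos_of_ne_zero h]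

/-- Uniqueness of the slowness curve from a relatively open subset fails for
some positive two-dimensional stiffness tensors (e.g. fully isotropic ones): there are two
positive tuples sharing a nonempty relatively open piece of their slowness curves whose full
slowness curves nevertheless differ. -/
theorem slowness_curve_not_determined_for_some_tensors :
    ∃ b b' : Fin 6 → ℝ, IsPositiveStiffness2 b ∧ IsPositiveStiffness2 b' ∧ b ≠ b' ∧
      ∃ V : Set (Fin 2 → ℝ), V.Nonempty ∧ V ⊆ slownessSet b ∩ slownessSet b' ∧
        IsRelativelyOpen V (slownessSet b) ∧ IsRelativelyOpen V (slownessSet b') ∧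
        slownessSet b ≠ slownessSet b' := by
  refine ⟨bA, bB, posA, posB, ?_, {p | p 0 ^ 2 + p 1 ^ 2 = 1}, ⟨![1, 0], by norm_num⟩,
    ?_, ?_, ?_, ?_⟩
  · intro h
    have : bA 1 = bB 1 := by rw [h]
    norm_num [bA, bB] at this
  · intro p hp
    simp only [Set.mem_setOf_eq] at hp
    constructor <;> simp only [slownessSet, Set.mem_setOf_eq, detA, detB, hp] <;> ring
  · refine ⟨{p | p 0 ^ 2 + p 1 ^ 2 < 2}, ?_, ?_⟩
    · exact isOpen_lt (by fun_prop) continuous_const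
    · ext p
      simp only [Set.mem_setOf_eq, Set.mem_inter_iff, slownessSet, detA]
      constructor
      · intro hp; exact ⟨by linarith, by rw [hp]; ring⟩
      · rintro ⟨hlt, heq⟩
        rcases mul_eq_zero.mp heq with h | h
        · linarith
        · linarith
  · refine ⟨{p | p 0 ^ 2 + p 1 ^ 2 < 2}, ?_, ?_⟩
    · exact isOpen_lt (by fun_prop) continuous_const
    · ext p
      simp only [Set.mem_setOf_eq, Set.mem_inter_iff, slownessSet, detB]
      constructor
      · intro hp; exact ⟨by linarith, by rw [hp]; ring⟩
      · rintro ⟨hlt, heq⟩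
        rcases mul_eq_zero.mp heq with h | h
        · linarith
        · linarith
  · intro h
    have h1 : (![1, 1] : Fin 2 → ℝ) ∈ slownessSet bA := by
      simp only [slownessSet, Set.mem_setOf_eq, detA]
      norm_num
    rw [h] at h1
    simp [slownessSet, detB] at h1
    norm_num at h1
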